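/- Let D > 0 and let S ⊆ ℝᴺ be a bounded set of diameter at most D. Then S is contained in a closed ball of radius D·√(N/(2(N+1))); in particular, since √(N/(2(N+1))) < 1/√2, S is contained in a ball of radius strictly less than D/√2, so ℝᴺ is an FR-space. -/

import Mathlib

open Metric Finset

section aux

variable {E : Type*} [NormedAddCommGroup E] [InnerProductSpace ℝ E]

local notation "⟪" a ", " b "⟫" => inner (𝕜 := ℝ) a b

private lemma norm_sq_sum_smul {n : ℕ} (x : Fin (n+1) → E) (w : Fin (n+1) → ℝ) :
    ‖∑ i, w i • x i‖^2 = ∑ i, ∑ j, w i * w j * ⟪x i, x j⟫ := by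
  rw [← real_inner_self_eq_norm_sq, inner_sum]
  refine Finset.sum_congr rfl fun j _ => ?_
  rw [real_inner_smul_right, sum_inner, Finset.mul_sum]
  refine Finset.sum_congr rfl fun i _ => ?_
  rw [real_inner_smul_left, real_inner_comm]; ring

/-- The mixture identity for the variance functional. -/
private lemma jung_mix {n : ℕ} (x : Fin (n+1) → E) (w : Fin (n+1) → ℝ) (t : ℝ)
    (j : Fin (n+1)) :
    (∑ i, ((1-t) * w i + t * (Pi.single j 1 : Fin (n+1) → ℝ) i) * ‖x i‖^2)
      - ‖∑ i, ((1-t) * w i + t * (Pi.single j 1 : Fin (n+1) → ℝ) i) • x i‖^2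
    = (1-t) * ((∑ i, w i * ‖x i‖^2) - ‖∑ i, w i • x i‖^2)
      + t * (1-t) * ‖x j - ∑ i, w i • x i‖^2 := by
  have hsum : ∑ i, ((1-t) * w i + t * (Pi.single j 1 : Fin (n+1) → ℝ) i) • x i
      = (1-t) • (∑ i, w i • x i) + t • x j := by
    have h1 : t • x j = ∑ i, (t * (Pi.single j 1 : Fin (n+1) → ℝ) i) • x i := by
      rw [Finset.sum_eq_single j]
      · simp
      · intro i _ hij; simp [Pi.single_apply, hij]
      · simp
    rw [h1, Finset.smul_sum, ← Finset.sum_add_distrib]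
    refine Finset.sum_congr rfl fun i _ => ?_
    rw [add_smul, smul_smul]
  have hA : ∑ i, ((1-t) * w i + t * (Pi.single j 1 : Fin (n+1) → ℝ) i) * ‖x i‖^2
      = (1-t) * (∑ i, w i * ‖x i‖^2) + t * ‖x j‖^2 := by
    have h2 : t * ‖x j‖^2 = ∑ i, (t * (Pi.single j 1 : Fin (n+1) → ℝ) i) * ‖x i‖^2 := by
      rw [Finset.sum_eq_single j]
      · simp
      · intro i _ hij; simp [Pi.single_apply, hij]
      · simp
    rw [h2, Finset.mul_sum, ← Finset.sum_add_distrib]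
    refine Finset.sum_congr rfl fun i _ => ?_
    ring
  rw [hsum, hA]
  set c : E := ∑ i, w i • x i with hc
  have e1 : ‖(1 - t) • c + t • x j‖^2
      = (1-t)^2 * ‖c‖^2 + 2*t*(1-t)*⟪c, x j⟫ + t^2 * ‖x j‖^2 := by
    rw [norm_add_sq_real, norm_smul, norm_smul, real_inner_smul_left,
      real_inner_smul_right, Real.norm_eq_abs, Real.norm_eq_abs, mul_pow, mul_pow,
      sq_abs, sq_abs]
    ring
  have e2 : ‖x j - c‖^2 = ‖x j‖^2 - 2*⟪c, x j⟫ + ‖c‖^2 := by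
    rw [← real_inner_self_eq_norm_sq, inner_sub_sub_self, real_inner_self_eq_norm_sq,
      real_inner_self_eq_norm_sq, real_inner_comm (x j) c]
    ring
  rw [e1, e2]
  ring

/-- The double-sum identity for the variance functional. -/
private lemma jung_double {n : ℕ} (x : Fin (n+1) → E) (w : Fin (n+1) → ℝ)
    (hw1 : ∑ i, w i = 1) :
    ∑ i, ∑ k, w i * w k * ‖x i - x k‖^2
      = 2 * ((∑ i, w i * ‖x i‖^2) - ‖∑ i, w i • x i‖^2) := by
  have expand : ∀ i k : Fin (n+1), w i * w k * ‖x i - x k‖^2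
      = w i * w k * ‖x i‖^2 + w i * w k * ‖x k‖^2 - 2 * (w i * w k * ⟪x i, x k⟫) := by
    intro i k
    have : ‖x i - x k‖^2 = ‖x i‖^2 + ‖x k‖^2 - 2 * ⟪x i, x k⟫ := by
      rw [← real_inner_self_eq_norm_sq, inner_sub_sub_self, real_inner_self_eq_norm_sq,
        real_inner_self_eq_norm_sq, real_inner_comm (x k) (x i)]
      ring
    rw [this]; ring
  have l2 : ∑ i, ∑ k, w i * w k * ‖x i‖^2 = ∑ i, w i * ‖x i‖^2 := by
    refine Finset.sum_congr rfl fun i _ => ?_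
    calc ∑ k, w i * w k * ‖x i‖^2 = w i * ‖x i‖^2 * ∑ k, w k := by
          rw [Finset.mul_sum]; exact Finset.sum_congr rfl fun k _ => by ring
      _ = w i * ‖x i‖^2 := by rw [hw1, mul_one]
  have l3 : ∑ i, ∑ k, w i * w k * ‖x k‖^2 = ∑ k, w k * ‖x k‖^2 := by
    rw [Finset.sum_comm]
    refine Finset.sum_congr rfl fun k _ => ?_
    calc ∑ i, w i * w k * ‖x k‖^2 = w k * ‖x k‖^2 * ∑ i, w i := by
          rw [Finset.mul_sum]; exact Finset.sum_congr rfl fun i _ => by ring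
      _ = w k * ‖x k‖^2 := by rw [hw1, mul_one]
  calc ∑ i, ∑ k, w i * w k * ‖x i - x k‖^2
      = ∑ i, ((∑ k, w i * w k * ‖x i‖^2) + (∑ k, w i * w k * ‖x k‖^2)
          - 2 * ∑ k, w i * w k * ⟪x i, x k⟫) := by
        refine Finset.sum_congr rfl fun i _ => ?_
        rw [← Finset.sum_add_distrib, Finset.mul_sum, ← Finset.sum_sub_distrib]
        exact Finset.sum_congr rfl fun k _ => expand i k
    _ = (∑ i, ∑ k, w i * w k * ‖x i‖^2) + (∑ i, ∑ k, w i * w k * ‖x k‖^2)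
          - 2 * ∑ i, ∑ k, w i * w k * ⟪x i, x k⟫ := by
        rw [← Finset.sum_add_distrib, Finset.mul_sum, ← Finset.sum_sub_distrib]
    _ = 2 * ((∑ i, w i * ‖x i‖^2) - ‖∑ i, w i • x i‖^2) := by
        rw [l2, l3, ← norm_sq_sum_smul]; ring

/-- Finite Jung lemma. -/
private lemma jung_finite {n : ℕ} (D : ℝ) (hD : 0 ≤ D) (x : Fin (n+1) → E)
    (hx : ∀ i j, dist (x i) (x j) ≤ D) :
    ∃ c : E, ∀ j, dist (x j) c ≤ D * Real.sqrt ((n : ℝ) / (2 * ((n : ℝ) + 1))) := by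
  classical
  set V : (Fin (n+1) → ℝ) → ℝ :=
    fun w => (∑ i, w i * ‖x i‖^2) - ‖∑ i, w i • x i‖^2 with hV
  have hVcont : ContinuousOn V (stdSimplex ℝ (Fin (n+1))) := by
    apply Continuous.continuousOn; fun_prop
  obtain ⟨w, hwmem, hwmax⟩ :=
    (isCompact_stdSimplex ℝ (Fin (n+1))).exists_isMaxOn
      ⟨_, single_mem_stdSimplex ℝ 0⟩ hVcont
  obtain ⟨hw0, hw1⟩ := hwmem
  set c : E := ∑ i, w i • x i with hc
  have hV0 : 0 ≤ V w := by
    have h := hwmax (single_mem_stdSimplex ℝ (0 : Fin (n+1)))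
    have hz : V (Pi.single (0 : Fin (n+1)) 1) = 0 := by
      simp [hV, Pi.single_apply, ite_mul, ite_smul, Finset.sum_ite_eq]
    simpa [hz] using h
  refine ⟨c, fun j => ?_⟩
  -- Step A : ‖x j - c‖^2 ≤ V w
  have stepA : ‖x j - c‖^2 ≤ V w := by
    by_contra hlt
    push_neg at hlt
    have hdpos : 0 < ‖x j - c‖^2 := lt_of_le_of_lt hV0 hlt
    set d : ℝ := ‖x j - c‖^2 with hd
    set t : ℝ := (d - V w) / (2 * d) with ht
    have ht0 : 0 < t := div_pos (by linarith) (by linarith)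
    have ht1 : t < 1 := by
      rw [ht, div_lt_one (by linarith)]
      linarith
    set μ : Fin (n+1) → ℝ :=
      fun i => (1 - t) * w i + t * (Pi.single j 1 : Fin (n+1) → ℝ) i with hμ
    have hμmem : μ ∈ stdSimplex ℝ (Fin (n+1)) := by
      constructor
      · intro i
        exact add_nonneg (mul_nonneg (by linarith) (hw0 i))
          (mul_nonneg ht0.le ((single_mem_stdSimplex ℝ j).1 i))
      · simp only [hμ, Finset.sum_add_distrib, ← Finset.mul_sum, hw1,
          (single_mem_stdSimplex ℝ j).2, mul_one]
        ring
    have hVle : V μ ≤ V w := hwmax hμmem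
    have hmix : V μ = (1 - t) * V w + t * (1 - t) * d := by
      simpa only [← hV, ← hc, ← hd] using jung_mix x w t j
    rw [hmix] at hVle
    -- (1-t) * V w + t*(1-t)*d ≤ V w  gives  (1-t)*d ≤ V w
    have h2 : (1 - t) * d ≤ V w := by nlinarith
    have h3 : (1 - t) * d = d - (d - V w) / 2 := by
      rw [ht]; field_simp
    rw [h3] at h2
    clear_value d t
    revert h2 hlt
    generalize V w = vw
    intro h2 hlt
    linarith
  -- Step B : V w ≤ D^2 * (n / (2*(n+1)))
  have hn1 : (0:ℝ) < (n : ℝ) + 1 := by positivity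
  have stepB : V w ≤ D^2 * ((n:ℝ) / (2 * ((n:ℝ) + 1))) := by
    have key : 2 * V w = ∑ i, ∑ k, w i * w k * ‖x i - x k‖^2 := by
      rw [jung_double x w hw1]
    have hterm : ∀ i k : Fin (n+1), w i * w k * ‖x i - x k‖^2
        ≤ w i * w k * D^2 - (if i = k then w i * w k * D^2 else 0) := by
      intro i k
      by_cases hik : i = k
      · simp [hik]
      · simp only [hik, if_false, sub_zero]
        have hle : ‖x i - x k‖^2 ≤ D^2 := by
          have := hx i k
          rw [dist_eq_norm] at this
          nlinarith [norm_nonneg (x i - x k)]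
        exact mul_le_mul_of_nonneg_left hle (mul_nonneg (hw0 i) (hw0 k))
    have hsum1 : ∑ i, ∑ k, (w i * w k * D^2 - (if i = k then w i * w k * D^2 else 0))
        = D^2 * (1 - ∑ i, (w i)^2) := by
      have p1 : ∑ i, ∑ k, w i * w k * D^2 = D^2 := by
        calc ∑ i, ∑ k, w i * w k * D^2 = ∑ i, w i * D^2 * ∑ k, w k := by
              refine Finset.sum_congr rfl fun i _ => ?_
              rw [Finset.mul_sum]; exact Finset.sum_congr rfl fun k _ => by ring
          _ = ∑ i, w i * D^2 := by simp [hw1]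
          _ = (∑ i, w i) * D^2 := by rw [Finset.sum_mul]
          _ = D^2 := by rw [hw1, one_mul]
      have p2 : ∑ i : Fin (n+1), ∑ k, (if i = k then w i * w k * D^2 else 0)
          = ∑ i, (w i)^2 * D^2 := by
        refine Finset.sum_congr rfl fun i _ => ?_
        rw [Finset.sum_ite_eq]
        simp [sq, mul_assoc]
      simp only [Finset.sum_sub_distrib, p1, p2]
      rw [← Finset.sum_mul]
      ring
    have hCS : (1:ℝ) ≤ ((n:ℝ) + 1) * ∑ i, (w i)^2 := by
      have := sq_sum_le_card_mul_sum_sq (s := (Finset.univ : Finset (Fin (n+1))))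
        (f := w)
      rw [hw1] at this
      simpa using this
    have hb : 2 * V w ≤ D^2 * (1 - ∑ i, (w i)^2) := by
      rw [key, ← hsum1]
      exact Finset.sum_le_sum fun i _ => Finset.sum_le_sum fun k _ => hterm i k
    have hDsq : (0:ℝ) ≤ D^2 := sq_nonneg D
    have hS0 : (0:ℝ) ≤ ∑ i, (w i)^2 := Finset.sum_nonneg fun i _ => sq_nonneg _
    rw [mul_div_assoc', le_div_iff₀ (by positivity)]
    nlinarith [mul_le_mul_of_nonneg_left hb (le_of_lt hn1),
      mul_le_mul_of_nonneg_left hCS hDsq]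
  -- conclude
  have hq0 : (0:ℝ) ≤ (n:ℝ) / (2 * ((n:ℝ) + 1)) := by positivity
  have hr0 : (0:ℝ) ≤ D * Real.sqrt ((n:ℝ) / (2 * ((n:ℝ) + 1))) := by positivity
  have hrsq : (D * Real.sqrt ((n:ℝ) / (2 * ((n:ℝ) + 1))))^2
      = D^2 * ((n:ℝ) / (2 * ((n:ℝ) + 1))) := by
    rw [mul_pow, Real.sq_sqrt hq0]
  rw [dist_eq_norm]
  calc ‖x j - c‖ = Real.sqrt (‖x j - c‖^2) := (Real.sqrt_sq (norm_nonneg _)).symm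
    _ ≤ Real.sqrt ((D * Real.sqrt ((n:ℝ) / (2 * ((n:ℝ) + 1))))^2) := by
        apply Real.sqrt_le_sqrt
        rw [hrsq]
        exact le_trans stepA stepB
    _ = D * Real.sqrt ((n:ℝ) / (2 * ((n:ℝ) + 1))) := Real.sqrt_sq hr0

end aux

/-- Jung's theorem in `ℝᴺ` and the FR-space property of Euclidean space: any
bounded set `S` of diameter at most `D > 0` is contained in a closed ball of
radius `D·√(N/(2(N+1)))`, and this radius is strictly less than `D/√2`. -/
theorem jung_FR_euclidean {N : ℕ} (D : ℝ) (hD : 0 < D)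
    (S : Set (EuclideanSpace ℝ (Fin N)))
    (hS : Bornology.IsBounded S) (hdiam : diam S ≤ D) :
    ∃ c : EuclideanSpace ℝ (Fin N),
      S ⊆ closedBall c (D * Real.sqrt ((N : ℝ) / (2 * ((N : ℝ) + 1)))) ∧
      D * Real.sqrt ((N : ℝ) / (2 * ((N : ℝ) + 1))) < D / Real.sqrt 2 := by
  classical
  set q : ℝ := (N : ℝ) / (2 * ((N : ℝ) + 1)) with hq
  have hq0 : 0 ≤ q := by positivity
  set r : ℝ := D * Real.sqrt q with hr
  -- the strict inequality
  have hlt : r < D / Real.sqrt 2 := by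
    have h1 : q < 2⁻¹ := by
      rw [hq, div_lt_iff₀ (by positivity)]
      push_cast
      nlinarith [Nat.cast_nonneg (α := ℝ) N]
    have h2 : Real.sqrt q < Real.sqrt 2⁻¹ := Real.sqrt_lt_sqrt hq0 h1
    calc r < D * Real.sqrt 2⁻¹ := by
          rw [hr]; exact mul_lt_mul_of_pos_left h2 hD
      _ = D / Real.sqrt 2 := by rw [Real.sqrt_inv, div_eq_mul_inv]
  rcases S.eq_empty_or_nonempty with hSe | ⟨s₀, hs₀⟩
  · exact ⟨0, by simp [hSe], hlt⟩
  -- Helly's theorem applied to the closed balls of radius r around points of S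
  have key : (⋂ p : S, closedBall (p : EuclideanSpace ℝ (Fin N)) r).Nonempty := by
    apply Convex.helly_theorem_compact' (𝕜 := ℝ)
      (fun p => convex_closedBall _ _) (fun p => isCompact_closedBall _ _)
    intro I hI
    rw [finrank_euclideanSpace_fin] at hI
    rcases I.eq_empty_or_nonempty with hIe | ⟨i₀, hi₀⟩
    · simp [hIe]
    set e := I.equivFin with he
    set x : Fin (N+1) → EuclideanSpace ℝ (Fin N) :=
      fun k => if h : (k : ℕ) < I.card then ((e.symm ⟨k, h⟩ : S) : _) else ((i₀ : S) : _)
      with hx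
    have hxS : ∀ k, (x k : EuclideanSpace ℝ (Fin N)) ∈ S := by
      intro k
      rw [hx]
      dsimp only
      split
      · exact (e.symm _).1.2
      · exact i₀.2
    have hpair : ∀ i j, dist (x i) (x j) ≤ D :=
      fun i j => le_trans (dist_le_diam_of_mem hS (hxS i) (hxS j)) hdiam
    obtain ⟨c, hc⟩ := jung_finite D hD.le x hpair
    refine ⟨c, ?_⟩
    rw [Set.mem_iInter₂]
    intro p hp
    have hm : ((e ⟨p, hp⟩ : Fin I.card) : ℕ) < I.card := (e ⟨p, hp⟩).2
    have hmN : ((e ⟨p, hp⟩ : Fin I.card) : ℕ) < N + 1 := lt_of_lt_of_le hm hI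
    have hxk : x ⟨_, hmN⟩ = (p : EuclideanSpace ℝ (Fin N)) := by
      rw [hx]
      dsimp only
      rw [dif_pos hm]
      congr 1
      simp
    rw [mem_closedBall, dist_comm, ← hxk]
    exact hc _
  obtain ⟨c, hc⟩ := key
  rw [Set.mem_iInter] at hc
  refine ⟨c, fun s hs => ?_, hlt⟩
  have := hc ⟨s, hs⟩
  rw [mem_closedBall] at this ⊢
  rw [dist_comm]
  exact this
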